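/- arXiv:1402.4987 — 2 statements merged into one kernel-verified Lean document; each statement's English description precedes it below -/
import Mathlib

section
/- Let β > 0, ζ > 0, N > 0 and 0 < ε with εβ < 2. Let b : [0,1] → ℝ be continuous with b(0) = 0 and write b*_1 = sup_{0≤s≤1} |b(s)|. Let f ∈ L²([0,1];ℝ) with ‖f‖_{L²([0,1])} ≤ N, set h(t) = ∫₀^t f(s) ds, let g : [0,1] → ℝ be continuous and nonnegative, and let ξ : [0,1] → ℝ be continuous and positive such that for every t ∈ [0,1], ξ(t)^{1+β} = e^{-(1+β)(2-εβ)t/2 + (1+β)h(t) + √ε(1+β)b(t)} ζ^{1+β} + (1+β) ∫₀^t e^{-(1+β)(2-εβ)(t-s)/2 + (1+β)(h(t)-h(s)) + √ε(1+β)(b(t)-b(s))} g(s) ds. Then inf_{0≤t≤1} ξ(t) ≥ e^{-1 - N - √ε b*_1} ζ. -/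
open MeasureTheory Set Real

/-! Dropping the nonnegative Duhamel integral leaves
`ξ(t) ≥ exp (-(2 - εβ) t / 2 + h(t) + √ε b(t)) ζ`, and each term of the exponent is bounded below
on `[0, 1]`: the drift by `-1`, the control by `-N` (Cauchy–Schwarz, `|h(t)| ≤ ‖f‖_{L²}`), and the
noise by `-√ε b*_1`. -/

theorem ProbabilityTheory.sq_integral_le_integral_sq {Ω : Type*} [MeasurableSpace Ω]
    {μ : Measure Ω} [IsProbabilityMeasure μ] {X : Ω → ℝ} (hX : MemLp X 2 μ) :
    (∫ ω, X ω ∂μ) ^ 2 ≤ ∫ ω, X ω ^ 2 ∂μ := by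
  have := variance_nonneg X μ
  rw [variance_eq_sub hX] at this
  simpa [sub_nonneg] using this

theorem integral_abs_le_sqrt_integral_sq_unitInterval {f : ℝ → ℝ}
    (hf : IntervalIntegrable f volume 0 1)
    (hf2 : IntervalIntegrable (fun s => f s ^ 2) volume 0 1) :
    ∫ s in (0:ℝ)..1, |f s| ≤ √(∫ s in (0:ℝ)..1, f s ^ 2) := by
  have : IsProbabilityMeasure (volume.restrict (Ioc (0:ℝ) 1)) := ⟨by simp⟩
  have hmem : MemLp (fun s => |f s|) 2 (volume.restrict (Ioc (0:ℝ) 1)) :=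
    (memLp_two_iff_integrable_sq hf.1.aestronglyMeasurable.norm).2 <| by
      simp only [norm_eq_abs, sq_abs]
      exact hf2.1
  rw [intervalIntegral.integral_of_le zero_le_one, intervalIntegral.integral_of_le zero_le_one]
  refine le_sqrt_of_sq_le ?_
  simpa using ProbabilityTheory.sq_integral_le_integral_sq hmem

theorem abs_intervalIntegral_le_sqrt_integral_sq {f : ℝ → ℝ} {t : ℝ} (ht : t ∈ Icc (0:ℝ) 1)
    (hf : IntervalIntegrable f volume 0 1)
    (hf2 : IntervalIntegrable (fun s => f s ^ 2) volume 0 1) :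
    |∫ s in (0:ℝ)..t, f s| ≤ √(∫ s in (0:ℝ)..1, f s ^ 2) :=
  calc |∫ s in (0:ℝ)..t, f s| ≤ ∫ s in (0:ℝ)..t, |f s| :=
        intervalIntegral.abs_integral_le_integral_abs ht.1
    _ ≤ ∫ s in (0:ℝ)..1, |f s| :=
        intervalIntegral.integral_mono_interval le_rfl ht.1 ht.2
          (ae_of_all _ fun _ => abs_nonneg _) hf.abs
    _ ≤ √(∫ s in (0:ℝ)..1, f s ^ 2) := integral_abs_le_sqrt_integral_sq_unitInterval hf hf2

theorem exp_mul_le_of_exp_mul_rpow_le_rpow {p A ζ x : ℝ} (hp : 0 < p) (hζ : 0 ≤ ζ) (hx : 0 ≤ x)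
    (h : exp (p * A) * ζ ^ p ≤ x ^ p) : exp A * ζ ≤ x := by
  rw [← rpow_le_rpow_iff (by positivity) hx hp, mul_rpow (exp_pos A).le hζ, ← exp_mul, mul_comm A]
  exact h

theorem stmt_9_general (β ζ N ε : ℝ) (hβ : 0 < β) (hζ : 0 < ζ)
    (hε : 0 < ε)
    (b : ℝ → ℝ) (hb : ContinuousOn b (Icc 0 1))
    (f : ℝ → ℝ)
    (hf : IntervalIntegrable f volume 0 1)
    (hf2 : IntervalIntegrable (fun s => f s ^ 2) volume 0 1)
    (hfN : Real.sqrt (∫ s in (0:ℝ)..1, f s ^ 2) ≤ N)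
    (h : ℝ → ℝ) (hdef : ∀ t, h t = ∫ s in (0:ℝ)..t, f s)
    (g ξ : ℝ → ℝ)
    (hgpos : ∀ t ∈ Icc (0:ℝ) 1, 0 ≤ g t)
    (hξpos : ∀ t ∈ Icc (0:ℝ) 1, 0 < ξ t)
    (heq : ∀ t ∈ Icc (0:ℝ) 1,
      ξ t ^ (1 + β) =
        Real.exp (-(1 + β) * (2 - ε * β) * t / 2 + (1 + β) * h t
            + Real.sqrt ε * (1 + β) * b t) * ζ ^ (1 + β)
        + (1 + β) * ∫ s in (0:ℝ)..t,
            Real.exp (-(1 + β) * (2 - ε * β) * (t - s) / 2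
              + (1 + β) * (h t - h s) + Real.sqrt ε * (1 + β) * (b t - b s)) * g s) :
    Real.exp (-1 - N - Real.sqrt ε * sSup ((fun s => |b s|) '' Icc (0:ℝ) 1)) * ζ
      ≤ sInf (ξ '' Icc (0:ℝ) 1) := by
  set M := sSup ((fun s => |b s|) '' Icc (0:ℝ) 1)
  refine le_csInf ⟨ξ 0, 0, by simp, rfl⟩ ?_
  rintro _ ⟨t, ht, rfl⟩
  set A := -(2 - ε * β) * t / 2 + h t + √ε * b t
  have hdrift : -1 ≤ -(2 - ε * β) * t / 2 := by nlinarith [ht.1, ht.2, mul_pos hε hβ]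
  have hcontrol : -N ≤ h t := by
    have := (hdef t ▸ abs_intervalIntegral_le_sqrt_integral_sq ht hf hf2).trans hfN
    linarith [neg_abs_le (h t)]
  have hnoise : -(√ε * M) ≤ √ε * b t := by
    have hbM : |b t| ≤ M :=
      le_csSup (isCompact_Icc.image_of_continuousOn hb.abs).bddAbove ⟨t, ht, rfl⟩
    nlinarith [neg_abs_le (b t), sqrt_nonneg ε]
  have hduhamel : 0 ≤ (1 + β) * ∫ s in (0:ℝ)..t,
      exp (-(1 + β) * (2 - ε * β) * (t - s) / 2
        + (1 + β) * (h t - h s) + √ε * (1 + β) * (b t - b s)) * g s :=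
    mul_nonneg (by positivity) <| intervalIntegral.integral_nonneg ht.1 fun s hs =>
      mul_nonneg (exp_pos _).le (hgpos s ⟨hs.1, hs.2.trans ht.2⟩)
  calc exp (-1 - N - √ε * M) * ζ ≤ exp A * ζ := by gcongr; simp only [A]; linarith
    _ ≤ ξ t := by
      refine exp_mul_le_of_exp_mul_rpow_le_rpow (p := 1 + β) (by positivity) hζ.le
        (hξpos t ht).le ?_
      rw [heq t ht]
      exact le_add_of_le_of_nonneg (le_of_eq (by simp only [A]; ring_nf)) hduhamel

/-- Pathwise form of inequality (4.25): infimum lower bound for the controlled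
stochastic inhibitor. -/
theorem stmt_9 (β ζ N ε : ℝ) (hβ : 0 < β) (hζ : 0 < ζ) (hN : 0 < N)
    (hε : 0 < ε) (hεβ : ε * β < 2)
    (b : ℝ → ℝ) (hb : ContinuousOn b (Icc 0 1)) (hb0 : b 0 = 0)
    (f : ℝ → ℝ)
    (hf : IntervalIntegrable f volume 0 1)
    (hf2 : IntervalIntegrable (fun s => f s ^ 2) volume 0 1)
    (hfN : Real.sqrt (∫ s in (0:ℝ)..1, f s ^ 2) ≤ N)
    (h : ℝ → ℝ) (hdef : ∀ t, h t = ∫ s in (0:ℝ)..t, f s)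
    (g ξ : ℝ → ℝ)
    (hg : ContinuousOn g (Icc 0 1)) (hgpos : ∀ t ∈ Icc (0:ℝ) 1, 0 ≤ g t)
    (hξ : ContinuousOn ξ (Icc 0 1)) (hξpos : ∀ t ∈ Icc (0:ℝ) 1, 0 < ξ t)
    (heq : ∀ t ∈ Icc (0:ℝ) 1,
      ξ t ^ (1 + β) =
        Real.exp (-(1 + β) * (2 - ε * β) * t / 2 + (1 + β) * h t
            + Real.sqrt ε * (1 + β) * b t) * ζ ^ (1 + β)
        + (1 + β) * ∫ s in (0:ℝ)..t,
            Real.exp (-(1 + β) * (2 - ε * β) * (t - s) / 2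
              + (1 + β) * (h t - h s) + Real.sqrt ε * (1 + β) * (b t - b s)) * g s) :
    Real.exp (-1 - N - Real.sqrt ε * sSup ((fun s => |b s|) '' Icc (0:ℝ) 1)) * ζ
      ≤ sInf (ξ '' Icc (0:ℝ) 1) :=
  stmt_9_general β ζ N ε hβ hζ hε b hb f hf hf2 hfN h hdef g ξ hgpos hξpos heq
end

section
/- Let β > 0, δ > 0, ζ > 0, N > 0 and 0 < ε with εβ < 2. Let b : [0,1] → ℝ be continuous with b(0) = 0 and write b*_1 = sup_{0≤s≤1} |b(s)|. Let f ∈ L²([0,1];ℝ) with ‖f‖_{L²([0,1])} ≤ N, let g : [0,1] → ℝ be continuous and nonnegative, let ξ : [0,1] → ℝ be continuous and positive with ξ(s) ≥ e^{-1 - N - √ε b*_1} ζ for all s ∈ [0,1], and let m : [0,1] → ℝ be continuous with m(0) = 0, such that for every t ∈ [0,1], ξ(t)^{-δ} - ζ^{-δ} = (δ(2+ε+δε)/2) ∫₀^t ξ(s)^{-δ} ds - δ ∫₀^t g(s)/ξ(s)^{1+δ+β} ds - δ ∫₀^t ξ(s)^{-δ} f(s) ds - δ √ε m(t). Then ∫₀^1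 g(s)/ξ(s)^{1+β+δ} ds ≤ δ^{-1} ζ^{-δ} + ((2+ε+δε+2N)/2) e^{δ + δN + δ√ε b*_1} ζ^{-δ} + √ε sup_{0≤t≤1} |m(t)|. -/
/-!
Evaluate the identity at `t = 1` and solve for `δ ∫₀¹ g ξ^{-(1+δ+β)}`. The term `ξ(1)^{-δ}` is
nonnegative and can be dropped; the lower bound on `ξ` gives `ξ^{-δ} ≤ K := e^{δ + δN + δ√ε b*₁} ζ^{-δ}`,
which bounds `∫₀¹ ξ^{-δ}` by `K` and, since `∫₀¹ |f| ≤ ‖f‖_{L²} ≤ N`, also `|∫₀¹ ξ^{-δ} f|` by `K N`;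
finally `|m(1)| ≤ sup |m|`.
-/

open MeasureTheory Set Real

lemma rpow_neg_le_exp_mul_rpow_neg {ζ δ a x : ℝ} (hζ : 0 < ζ) (hδ : 0 ≤ δ)
    (hx : exp (-a) * ζ ≤ x) : x ^ (-δ) ≤ exp (δ * a) * ζ ^ (-δ) := by
  calc x ^ (-δ) ≤ (exp (-a) * ζ) ^ (-δ) :=
        rpow_le_rpow_of_nonpos (by positivity) hx (neg_nonpos.mpr hδ)
    _ = exp (δ * a) * ζ ^ (-δ) := by
        rw [mul_rpow (exp_pos _).le hζ.le, ← exp_mul]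
        ring_nf

/-- Cauchy–Schwarz on the unit interval, in the form `2|f| ≤ N + f²/N`. -/
lemma integral_abs_le_of_sqrt_integral_sq_le {f : ℝ → ℝ} {N : ℝ} (hN : 0 < N)
    (hf : IntervalIntegrable f volume 0 1)
    (hf2 : IntervalIntegrable (fun s => f s ^ 2) volume 0 1)
    (hfN : √(∫ s in (0:ℝ)..1, f s ^ 2) ≤ N) :
    ∫ s in (0:ℝ)..1, |f s| ≤ N := by
  set S := ∫ s in (0:ℝ)..1, f s ^ 2
  have hS : S ≤ N ^ 2 := (sqrt_le_left hN.le).mp hfN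
  have hamgm : ∀ s, |f s| ≤ (N + f s ^ 2 / N) / 2 := fun s => by
    rw [le_div_iff₀ two_pos, ← sub_nonneg,
      show N + f s ^ 2 / N - |f s| * 2 = (|f s| - N) ^ 2 / N by
        field_simp; rw [sub_sq, sq_abs]; ring]
    positivity
  have hmajorant : IntervalIntegrable (fun s => (N + f s ^ 2 / N) / 2) volume 0 1 :=
    (intervalIntegrable_const.add (hf2.div_const N)).div_const 2
  calc ∫ s in (0:ℝ)..1, |f s| ≤ ∫ s in (0:ℝ)..1, (N + f s ^ 2 / N) / 2 :=
        intervalIntegral.integral_mono_on zero_le_one hf.abs hmajorant fun s _ => hamgm s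
    _ = (N + S / N) / 2 := by
        rw [intervalIntegral.integral_div, intervalIntegral.integral_add
          intervalIntegrable_const (hf2.div_const N), intervalIntegral.integral_div]
        simp [S]
    _ ≤ N := by
        rw [div_le_iff₀ two_pos, ← sub_nonneg,
          show N * 2 - (N + S / N) = (N ^ 2 - S) / N by field_simp; ring]
        exact div_nonneg (sub_nonneg.mpr hS) hN.le

lemma abs_integral_mul_le_mul_integral_abs {φ f : ℝ → ℝ} {a b K : ℝ} (hab : a ≤ b)
    (hφf : IntervalIntegrable (fun s => φ s * f s) volume a b)
    (hf : IntervalIntegrable f volume a b) (hφ : ∀ s ∈ Icc a b, |φ s| ≤ K) :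
    |∫ s in a..b, φ s * f s| ≤ K * ∫ s in a..b, |f s| := by
  calc |∫ s in a..b, φ s * f s| ≤ ∫ s in a..b, |φ s * f s| :=
        intervalIntegral.abs_integral_le_integral_abs hab
    _ ≤ ∫ s in a..b, K * |f s| :=
        intervalIntegral.integral_mono_on hab hφf.abs (hf.abs.const_mul K) fun s hs => by
          rw [abs_mul]
          exact mul_le_mul_of_nonneg_right (hφ s hs) (abs_nonneg _)
    _ = K * ∫ s in a..b, |f s| := intervalIntegral.integral_const_mul _ _

lemma le_sSup_abs_image_Icc {m : ℝ → ℝ} {a b t : ℝ} (hm : ContinuousOn m (Icc a b))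
    (ht : t ∈ Icc a b) : |m t| ≤ sSup ((fun s => |m s|) '' Icc a b) :=
  le_csSup (isCompact_Icc.image_of_continuousOn hm.abs).bddAbove (mem_image_of_mem _ ht)

theorem stmt_11_general (β δ ζ N ε : ℝ) (hδ : 0 < δ) (hζ : 0 < ζ)
    (hN : 0 < N) (hε : 0 < ε)
    (b : ℝ → ℝ)
    (f : ℝ → ℝ)
    (hf : IntervalIntegrable f volume 0 1)
    (hf2 : IntervalIntegrable (fun s => f s ^ 2) volume 0 1)
    (hfN : Real.sqrt (∫ s in (0:ℝ)..1, f s ^ 2) ≤ N)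
    (g ξ m : ℝ → ℝ)
    (hξ : ContinuousOn ξ (Icc 0 1)) (hξpos : ∀ t ∈ Icc (0:ℝ) 1, 0 < ξ t)
    (hξlow : ∀ s ∈ Icc (0:ℝ) 1,
      Real.exp (-1 - N - Real.sqrt ε * sSup ((fun r => |b r|) '' Icc (0:ℝ) 1)) * ζ ≤ ξ s)
    (hm : ContinuousOn m (Icc 0 1))
    (heq : ∀ t ∈ Icc (0:ℝ) 1,
      ξ t ^ (-δ) - ζ ^ (-δ) =
        (δ * (2 + ε + δ * ε) / 2) * (∫ s in (0:ℝ)..t, ξ s ^ (-δ))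
        - δ * (∫ s in (0:ℝ)..t, g s / ξ s ^ (1 + δ + β))
        - δ * (∫ s in (0:ℝ)..t, ξ s ^ (-δ) * f s)
        - δ * Real.sqrt ε * m t) :
    (∫ s in (0:ℝ)..1, g s / ξ s ^ (1 + β + δ)) ≤
      δ⁻¹ * ζ ^ (-δ)
      + ((2 + ε + δ * ε + 2 * N) / 2)
          * Real.exp (δ + δ * N + δ * Real.sqrt ε * sSup ((fun s => |b s|) '' Icc (0:ℝ) 1))
          * ζ ^ (-δ)
      + Real.sqrt ε * sSup ((fun t => |m t|) '' Icc (0:ℝ) 1) := by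
  set A := sSup ((fun s => |b s|) '' Icc (0:ℝ) 1)
  set K := exp (δ + δ * N + δ * √ε * A) * ζ ^ (-δ)
  have hunit : (1:ℝ) ∈ Icc (0:ℝ) 1 := right_mem_Icc.mpr zero_le_one
  have hξK : ∀ s ∈ Icc (0:ℝ) 1, ξ s ^ (-δ) ≤ K := fun s hs => by
    have hlow : exp (-(1 + N + √ε * A)) * ζ ≤ ξ s := by
      rw [neg_add', neg_add']
      exact hξlow s hs
    convert rpow_neg_le_exp_mul_rpow_neg hζ hδ.le hlow using 3
    ring
  have hcont : ContinuousOn (fun s => ξ s ^ (-δ)) (uIcc 0 1) := by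
    rw [uIcc_of_le zero_le_one]
    exact hξ.rpow_const fun s hs => Or.inl (hξpos s hs).ne'
  have hI : ∫ s in (0:ℝ)..1, ξ s ^ (-δ) ≤ K := by
    simpa using intervalIntegral.integral_mono_on (μ := volume) zero_le_one
      hcont.intervalIntegrable intervalIntegrable_const hξK
  have hIf : |∫ s in (0:ℝ)..1, ξ s ^ (-δ) * f s| ≤ K * N :=
    (abs_integral_mul_le_mul_integral_abs zero_le_one (hf.continuousOn_mul hcont) hf
      fun s hs => (abs_of_nonneg (rpow_nonneg (hξpos s hs).le _)).trans_le (hξK s hs)).trans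
      (mul_le_mul_of_nonneg_left (integral_abs_le_of_sqrt_integral_sq_le hN hf hf2 hfN)
        (by positivity))
  set M := sSup ((fun t => |m t|) '' Icc (0:ℝ) 1)
  set G := ∫ s in (0:ℝ)..1, g s / ξ s ^ (1 + δ + β)
  have hm1 : |m 1| ≤ M := le_sSup_abs_image_Icc hm hunit
  have hξ1 : 0 ≤ ξ 1 ^ (-δ) := rpow_nonneg (hξpos 1 hunit).le _
  have hδG : δ * G ≤ ζ ^ (-δ) + δ * ((2 + ε + δ * ε + 2 * N) / 2 * K + √ε * M) := by
    have E := heq 1 hunit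
    have hcI := mul_le_mul_of_nonneg_left hI (by positivity : 0 ≤ δ * (2 + ε + δ * ε) / 2)
    nlinarith [mul_le_mul_of_nonneg_left (abs_le.mp hIf).1 hδ.le,
      mul_le_mul_of_nonneg_left (abs_le.mp hm1).1 (by positivity : 0 ≤ δ * √ε)]
  calc ∫ s in (0:ℝ)..1, g s / ξ s ^ (1 + β + δ) = δ⁻¹ * (δ * G) := by
        rw [inv_mul_cancel_left₀ hδ.ne', add_right_comm]
    _ ≤ δ⁻¹ * (ζ ^ (-δ) + δ * ((2 + ε + δ * ε + 2 * N) / 2 * K + √ε * M)) := by gcongr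
    _ = _ := by
        rw [mul_add, inv_mul_cancel_left₀ hδ.ne']
        ring

/-- Pathwise form of Lemma 4.6 for the controlled stochastic inhibitor. -/
theorem stmt_11 (β δ ζ N ε : ℝ) (hβ : 0 < β) (hδ : 0 < δ) (hζ : 0 < ζ)
    (hN : 0 < N) (hε : 0 < ε) (hεβ : ε * β < 2)
    (b : ℝ → ℝ) (hb : ContinuousOn b (Icc 0 1)) (hb0 : b 0 = 0)
    (f : ℝ → ℝ)
    (hf : IntervalIntegrable f volume 0 1)
    (hf2 : IntervalIntegrable (fun s => f s ^ 2) volume 0 1)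
    (hfN : Real.sqrt (∫ s in (0:ℝ)..1, f s ^ 2) ≤ N)
    (g ξ m : ℝ → ℝ)
    (hg : ContinuousOn g (Icc 0 1)) (hgpos : ∀ t ∈ Icc (0:ℝ) 1, 0 ≤ g t)
    (hξ : ContinuousOn ξ (Icc 0 1)) (hξpos : ∀ t ∈ Icc (0:ℝ) 1, 0 < ξ t)
    (hξlow : ∀ s ∈ Icc (0:ℝ) 1,
      Real.exp (-1 - N - Real.sqrt ε * sSup ((fun r => |b r|) '' Icc (0:ℝ) 1)) * ζ ≤ ξ s)
    (hm : ContinuousOn m (Icc 0 1)) (hm0 : m 0 = 0)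
    (heq : ∀ t ∈ Icc (0:ℝ) 1,
      ξ t ^ (-δ) - ζ ^ (-δ) =
        (δ * (2 + ε + δ * ε) / 2) * (∫ s in (0:ℝ)..t, ξ s ^ (-δ))
        - δ * (∫ s in (0:ℝ)..t, g s / ξ s ^ (1 + δ + β))
        - δ * (∫ s in (0:ℝ)..t, ξ s ^ (-δ) * f s)
        - δ * Real.sqrt ε * m t) :
    (∫ s in (0:ℝ)..1, g s / ξ s ^ (1 + β + δ)) ≤
      δ⁻¹ * ζ ^ (-δ)
      + ((2 + ε + δ * ε + 2 * N) / 2)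
          * Real.exp (δ + δ * N + δ * Real.sqrt ε * sSup ((fun s => |b s|) '' Icc (0:ℝ) 1))
          * ζ ^ (-δ)
      + Real.sqrt ε * sSup ((fun t => |m t|) '' Icc (0:ℝ) 1) :=
  stmt_11_general β δ ζ N ε hδ hζ hN hε b f hf hf2 hfN g ξ m hξ hξpos hξlow hm heq
end
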